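/- Consider the LCM-with-poking mechanism: given query q with sensitivity 1, threshold c, tolerance (α, β) with 0 < β < 1/2, and fraction f > 0, it first computes x̃ = q(D) − c + η₀ with η₀ ∼ Laplace(1/ε₀) where ε₀ = f·ln(1/(2β))/α and sets α₀ = ln(1/β)/ε₀; if x̃ − α₀ + α ≥ 0 it returns True, if x̃ + α₀ − α ≤ 0 it returns False, and otherwise it runs an independent Laplace comparison mechanism achieving (α, β/2)-LCC tolerance. Then the overall mechanism satisfies (α, β)-LCC tolerance: P(output True | q(D) < c − α) ≤ β and P(output False | q(D) > c + α) ≤ β. -/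

import Mathlib

/-!
A run of the mechanism errs only if one of its two independent noises lands in a tail. Answering
True although `q d < c - α` forces `η₀ ≥ α₀` (the poke says True) or `η' > α` (the poke defers and
the inner comparison says True); answering False although `q d > c + α` forces `η₀ ≤ -α₀` or
`η' < -α`. Both scales are tuned so that `α₀ / (1/ε₀) = α / (α / ln(1/β)) = ln(1/β)`, so each of
these tails of a Laplace law has mass `exp(-ln(1/β)) / 2 = β / 2`, and the union bound gives `β`.
-/

open MeasureTheory

/-- The Laplace distribution with scale `b`. -/
noncomputable def laplace (b : ℝ) : Measure ℝ :=
  volume.withDensity fun z => ENNReal.ofReal ((1 / (2 * b)) * Real.exp (-|z| / b))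

open Set Real

section Laplace

variable {b t : ℝ}

lemma laplace_Ioi (hb : 0 < b) (ht : 0 ≤ t) :
    laplace b (Ioi t) = ENNReal.ofReal (exp (-t / b) / 2) := by
  have ha : -1 / b < 0 := div_neg_of_neg_of_pos neg_one_lt_zero hb
  have hdensity : ∀ z ∈ Ioi t, ENNReal.ofReal (1 / (2 * b) * exp (-|z| / b)) =
      ENNReal.ofReal (1 / (2 * b) * exp (-1 / b * z)) := fun z hz => by
    rw [abs_of_pos (ht.trans_lt hz)]
    ring_nf
  rw [laplace, withDensity_apply _ measurableSet_Ioi,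
    setLIntegral_congr_fun measurableSet_Ioi hdensity,
    ← ofReal_integral_eq_lintegral_ofReal ((integrableOn_exp_mul_Ioi ha t).const_mul _)
      (ae_of_all _ fun z => by positivity),
    integral_const_mul, integral_exp_mul_Ioi ha]
  congr 1
  field_simp

lemma laplace_Ici (hb : 0 < b) (ht : 0 ≤ t) :
    laplace b (Ici t) = ENNReal.ofReal (exp (-t / b) / 2) := by
  rw [laplace, withDensity_apply _ measurableSet_Ici,
    ← Measure.restrict_congr_set Ioi_ae_eq_Ici, ← withDensity_apply _ measurableSet_Ioi]
  exact laplace_Ioi hb ht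

lemma laplace_Iic (hb : 0 < b) (ht : t ≤ 0) :
    laplace b (Iic t) = ENNReal.ofReal (exp (t / b) / 2) := by
  have ha : 0 < 1 / b := one_div_pos.mpr hb
  have hdensity : ∀ z ∈ Iic t, ENNReal.ofReal (1 / (2 * b) * exp (-|z| / b)) =
      ENNReal.ofReal (1 / (2 * b) * exp (1 / b * z)) := fun z hz => by
    rw [abs_of_nonpos (le_trans hz ht)]
    ring_nf
  rw [laplace, withDensity_apply _ measurableSet_Iic,
    setLIntegral_congr_fun measurableSet_Iic hdensity,
    ← ofReal_integral_eq_lintegral_ofReal ((integrableOn_exp_mul_Iic ha t).const_mul _)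
      (ae_of_all _ fun z => by positivity),
    integral_const_mul, integral_exp_mul_Iic ha]
  congr 1
  field_simp

lemma isProbabilityMeasure_laplace (hb : 0 < b) : IsProbabilityMeasure (laplace b) := by
  constructor
  rw [← Iic_union_Ioi (a := 0), measure_union (Iic_disjoint_Ioi le_rfl) measurableSet_Ioi,
    laplace_Iic hb le_rfl, laplace_Ioi hb le_rfl,
    ← ENNReal.ofReal_add (by positivity) (by positivity)]
  norm_num

lemma laplace_Ici_eq_half (hb : 0 < b) {β : ℝ} (hβ0 : 0 < β) (hβ1 : β ≤ 1)
    (ht : t = b * log (1 / β)) : laplace b (Ici t) = ENNReal.ofReal (β / 2) := by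
  have ht0 : 0 ≤ t := ht ▸ mul_nonneg hb.le (log_nonneg (one_le_one_div hβ0 hβ1))
  rw [laplace_Ici hb ht0, ht, neg_div, mul_div_cancel_left₀ _ hb.ne', one_div, log_inv, neg_neg,
    exp_log hβ0]

lemma laplace_Iic_neg_eq_half (hb : 0 < b) {β : ℝ} (hβ0 : 0 < β) (hβ1 : β ≤ 1)
    (ht : t = b * log (1 / β)) : laplace b (Iic (-t)) = ENNReal.ofReal (β / 2) := by
  have ht0 : 0 ≤ t := ht ▸ mul_nonneg hb.le (log_nonneg (one_le_one_div hβ0 hβ1))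
  rw [laplace_Iic hb (neg_nonpos.mpr ht0), ht, neg_div, mul_div_cancel_left₀ _ hb.ne', one_div,
    log_inv, neg_neg, exp_log hβ0]

end Laplace

lemma Measure.prod_le_add_of_subset_union {X Y : Type*} [MeasurableSpace X] [MeasurableSpace Y]
    {μ : Measure X} {ν : Measure Y} [IsProbabilityMeasure μ] [IsProbabilityMeasure ν]
    {S : Set (X × Y)} {A : Set X} {B : Set Y} (hS : S ⊆ A ×ˢ univ ∪ univ ×ˢ B) :
    μ.prod ν S ≤ μ A + ν B :=
  calc μ.prod ν S ≤ μ.prod ν (A ×ˢ univ ∪ univ ×ˢ B) := measure_mono hS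
    _ ≤ μ.prod ν (A ×ˢ univ) + μ.prod ν (univ ×ˢ B) := measure_union_le _ _
    _ = μ A + ν B := by rw [Measure.prod_prod, Measure.prod_prod, measure_univ, measure_univ,
      mul_one, one_mul]

/-- The answer of LCM with poking at `x = q(D) - c` with poke threshold `α₀`, for the noise pair
`p = (η₀, η')`: the second disjunct is the poke deferring to the inner comparison. -/
def lcmPokingAnswer (x α α₀ : ℝ) (p : ℝ × ℝ) : Prop :=
  0 ≤ x + p.1 - α₀ + α ∨ (¬ 0 ≤ x + p.1 - α₀ + α ∧ ¬ x + p.1 + α₀ - α ≤ 0 ∧ 0 < x + p.2)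

section LCMPoking

variable {x α α₀ : ℝ}

lemma lcmPokingAnswer_subset_of_lt (hx : x < -α) :
    {p | lcmPokingAnswer x α α₀ p} ⊆ Ici α₀ ×ˢ univ ∪ univ ×ˢ Ici α := by
  rintro ⟨η₀, η'⟩ (hpoke | ⟨-, -, hinner⟩)
  · exact Or.inl ⟨mem_Ici.mpr (by linarith), trivial⟩
  · exact Or.inr ⟨trivial, mem_Ici.mpr (by linarith)⟩

lemma not_lcmPokingAnswer_subset_of_gt (hx : α < x) :
    {p | ¬ lcmPokingAnswer x α α₀ p} ⊆ Iic (-α₀) ×ˢ univ ∪ univ ×ˢ Iic (-α) := by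
  rintro ⟨η₀, η'⟩ hfalse
  simp only [mem_ofPred_eq, lcmPokingAnswer, not_or, not_and, not_lt] at hfalse
  obtain ⟨hnot_true, hdefer⟩ := hfalse
  by_cases hpoke : x + η₀ + α₀ - α ≤ 0
  · exact Or.inl ⟨mem_Iic.mpr (by linarith), trivial⟩
  · exact Or.inr ⟨trivial, mem_Iic.mpr (by linarith [hdefer hnot_true hpoke])⟩

end LCMPoking

theorem lcm_poking_tolerance_general {D : Type} (q : D → ℝ)
    (c α β f : ℝ) (hα : 0 < α) (hβ0 : 0 < β) (hβ : β < 1 / 2) (hf : 0 < f) :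
    ∀ d : D,
      (q d < c - α →
        ((laplace (1 / (f * Real.log (1 / (2 * β)) / α))).prod
            (laplace (α / Real.log (1 / β))))
          {p : ℝ × ℝ |
            (0 ≤ q d - c + p.1 - Real.log (1 / β) / (f * Real.log (1 / (2 * β)) / α) + α) ∨
            (¬ (0 ≤ q d - c + p.1 - Real.log (1 / β) / (f * Real.log (1 / (2 * β)) / α) + α) ∧
             ¬ (q d - c + p.1 + Real.log (1 / β) / (f * Real.log (1 / (2 * β)) / α) - α ≤ 0) ∧
             0 < q d - c + p.2)} ≤ ENNReal.ofReal β) ∧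
      (c + α < q d →
        ((laplace (1 / (f * Real.log (1 / (2 * β)) / α))).prod
            (laplace (α / Real.log (1 / β))))
          {p : ℝ × ℝ |
            ¬ ((0 ≤ q d - c + p.1 - Real.log (1 / β) / (f * Real.log (1 / (2 * β)) / α) + α) ∨
              (¬ (0 ≤ q d - c + p.1 - Real.log (1 / β) / (f * Real.log (1 / (2 * β)) / α) + α) ∧
               ¬ (q d - c + p.1 + Real.log (1 / β) / (f * Real.log (1 / (2 * β)) / α) - α ≤ 0) ∧
               0 < q d - c + p.2))} ≤ ENNReal.ofReal β) := by
  intro d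
  set L := log (1 / β)
  have hL : 0 < L := log_pos (one_lt_one_div hβ0 (by linarith))
  have hε₀ : 0 < f * log (1 / (2 * β)) / α :=
    div_pos (mul_pos hf (log_pos (one_lt_one_div (by positivity) (by linarith)))) hα
  set b₀ := 1 / (f * log (1 / (2 * β)) / α)
  set b := α / L
  have hb₀ : 0 < b₀ := one_div_pos.mpr hε₀
  have hb : 0 < b := div_pos hα hL
  have := isProbabilityMeasure_laplace hb₀
  have := isProbabilityMeasure_laplace hb
  have hα₀ : L / (f * log (1 / (2 * β)) / α) = b₀ * L := by ring
  have hαL : α = b * L := (div_mul_cancel₀ α hL.ne').symm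
  have hβ1 : β ≤ 1 := by linarith
  have hhalves : ENNReal.ofReal (β / 2) + ENNReal.ofReal (β / 2) = ENNReal.ofReal β := by
    rw [← ENNReal.ofReal_add (by positivity) (by positivity), add_halves]
  constructor
  · intro hq
    refine (Measure.prod_le_add_of_subset_union
      (lcmPokingAnswer_subset_of_lt (x := q d - c) (by linarith))).trans_eq ?_
    rw [laplace_Ici_eq_half hb₀ hβ0 hβ1 hα₀, laplace_Ici_eq_half hb hβ0 hβ1 hαL, hhalves]
  · intro hq
    refine (Measure.prod_le_add_of_subset_union
      (not_lcmPokingAnswer_subset_of_gt (x := q d - c) (by linarith))).trans_eq ?_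
    rw [laplace_Iic_neg_eq_half hb₀ hβ0 hβ1 hα₀, laplace_Iic_neg_eq_half hb hβ0 hβ1 hαL, hhalves]

/-- LCM with poking: with `ε₀ = f·ln(1/(2β))/α`, `α₀ = ln(1/β)/ε₀`,
`x̃ = q(D) − c + η₀`, `η₀ ∼ Laplace(1/ε₀)`, the mechanism returns True if
`x̃ − α₀ + α ≥ 0`, False if `x̃ + α₀ − α ≤ 0`, and otherwise returns the answer
of an independent Laplace comparison mechanism with noise
`η' ∼ Laplace(α/ln(1/β))`. It satisfies `(α, β)`-LCC tolerance. -/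
theorem lcm_poking_tolerance {D : Type} (neighbor : D → D → Prop) (q : D → ℝ)
    (hsens : ∀ d d', neighbor d d' → |q d - q d'| ≤ 1)
    (c α β f : ℝ) (hα : 0 < α) (hβ0 : 0 < β) (hβ : β < 1 / 2) (hf : 0 < f) :
    ∀ d : D,
      (q d < c - α →
        ((laplace (1 / (f * Real.log (1 / (2 * β)) / α))).prod
            (laplace (α / Real.log (1 / β))))
          {p : ℝ × ℝ |
            (0 ≤ q d - c + p.1 - Real.log (1 / β) / (f * Real.log (1 / (2 * β)) / α) + α) ∨
            (¬ (0 ≤ q d - c + p.1 - Real.log (1 / β) / (f * Real.log (1 / (2 * β)) / α) + α) ∧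
             ¬ (q d - c + p.1 + Real.log (1 / β) / (f * Real.log (1 / (2 * β)) / α) - α ≤ 0) ∧
             0 < q d - c + p.2)} ≤ ENNReal.ofReal β) ∧
      (c + α < q d →
        ((laplace (1 / (f * Real.log (1 / (2 * β)) / α))).prod
            (laplace (α / Real.log (1 / β))))
          {p : ℝ × ℝ |
            ¬ ((0 ≤ q d - c + p.1 - Real.log (1 / β) / (f * Real.log (1 / (2 * β)) / α) + α) ∨
              (¬ (0 ≤ q d - c + p.1 - Real.log (1 / β) / (f * Real.log (1 / (2 * β)) / α) + α) ∧
               ¬ (q d - c + p.1 + Real.log (1 / β) / (f * Real.log (1 / (2 * β)) / α) - α ≤ 0) ∧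
               0 < q d - c + p.2))} ≤ ENNReal.ofReal β) :=
  lcm_poking_tolerance_general q c α β f hα hβ0 hβ hf
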